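/- (Lax-functorial stability theorem, lax composition part.) In the situation described in the context, for all composable arrows d : S → T and e : T → U of E = D_{i0} and every μ ∈ M, one has (e ∘ d)^β_μ ⊆ e^β_μ ⊙ d^β_μ; explicitly, for every a ∈ S^β and every c ∈ (e ∘ d)^β_μ(a) there exists b ∈ d^β_μ(a) with c ∈ e^β_μ(b). Together with disjunctivity and the lax identity condition, this shows that β is an M-dynamic on E. -/

import Mathlib

open CategoryTheory

/-- A family of open dynamics `A_i = (α_i →^{ρ_i} h_i)` indexed by a nonempty set `I`:
engines `D i` (small categories), parameter sets `L i`, state carriers `X i` with the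
states of type `S` being `stS i S`, transitions `tr i d lam : X i → Set (X i)`,
clocks with instant carriers `H i`, instants of type `S` being `hS i S` and transition
functions `hmap i d`, and datations `rho i`, subject to the axioms of disjunctivity,
lax identity, lax composition, functoriality of the clocks and equivariance of the
datations. -/
structure DynFamily where
  I : Type
  nonemptyI : Nonempty I
  D : I → Cat.{0, 0}
  L : I → Type
  X : I → Type
  H : I → Type
  stS : ∀ i, D i → Set (X i)
  tr : ∀ i, ∀ {S T : D i}, (S ⟶ T) → L i → X i → Set (X i)
  hS : ∀ i, D i → Set (H i)
  hmap : ∀ i, ∀ {S T : D i}, (S ⟶ T) → H i → H i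
  rho : ∀ i, X i → H i
  stDisj : ∀ i, ∀ {S T : D i}, S ≠ T → stS i S ∩ stS i T = ∅
  laxId : ∀ i (S : D i) (lam : L i), ∀ a ∈ stS i S, tr i (𝟙 S) lam a ⊆ {a}
  laxComp : ∀ i, ∀ {S T U : D i} (d : S ⟶ T) (e : T ⟶ U) (lam : L i),
    ∀ a ∈ stS i S, tr i (d ≫ e) lam a ⊆ ⋃ b ∈ tr i d lam a, tr i e lam b
  trMem : ∀ i, ∀ {S T : D i} (d : S ⟶ T) (lam : L i), ∀ a ∈ stS i S,
    tr i d lam a ⊆ stS i T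
  hDisj : ∀ i, ∀ {S T : D i}, S ≠ T → hS i S ∩ hS i T = ∅
  hMem : ∀ i, ∀ {S T : D i} (d : S ⟶ T), ∀ t ∈ hS i S, hmap i d t ∈ hS i T
  hId : ∀ i (S : D i), ∀ t ∈ hS i S, hmap i (𝟙 S) t = t
  hComp : ∀ i, ∀ {S T U : D i} (d : S ⟶ T) (e : T ⟶ U),
    ∀ t ∈ hS i S, hmap i (d ≫ e) t = hmap i e (hmap i d t)
  rhoMem : ∀ i (S : D i), ∀ a ∈ stS i S, rho i a ∈ hS i S
  rhoNat : ∀ i, ∀ {S T : D i} (d : S ⟶ T) (lam : L i),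
    ∀ a ∈ stS i S, ∀ b ∈ tr i d lam a, rho i b = hmap i d (rho i a)

/-- The anteriority preorder on the instants of the `i`-th clock:
`s ≤ t` iff some arrow `e` of `D i` sends the instant `s` to `t`. -/
def DynFamily.ante (F : DynFamily) (i : F.I) (s t : F.H i) : Prop :=
  ∃ (S T : F.D i) (e : S ⟶ T), s ∈ F.hS i S ∧ F.hmap i e s = t

/-- `σ` (a partial function on instants, encoded via `Option`) is the outgoing part of a
realization of the `i`-th dynamic with parametric part `lam`. -/
def DynFamily.IsRealization (F : DynFamily) (i : F.I) (lam : F.L i)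
    (σ : F.H i → Option (F.X i)) : Prop :=
  (∀ t a, σ t = some a → ∃ S : F.D i, t ∈ F.hS i S) ∧
  (∀ t a, σ t = some a → F.rho i a = t) ∧
  (∀ (S : F.D i), ∀ t ∈ F.hS i S, ∀ a, σ t = some a → a ∈ F.stS i S) ∧
  (∀ ⦃S T : F.D i⦄ (d : S ⟶ T), ∀ t ∈ F.hS i S, ∀ b, σ (F.hmap i d t) = some b →
    ∃ a, σ t = some a ∧ b ∈ F.tr i d lam a)

/-- `σ` passes through the state `a` : `σ ▷ a` iff `σ(ρ_i(a)) = a`. -/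
def DynFamily.Pass (F : DynFamily) (i : F.I) (σ : F.H i → Option (F.X i)) (a : F.X i) : Prop :=
  σ (F.rho i a) = some a

/-- An interaction for a family of open dynamics: an interaction request `R` (a set of
`I`-families of pairs (outgoing realization, parameter value)), a conductor `i0` and a
synchronization `(Δ_i, δ_i) : h_{i0} ⇝ h_i`, each `δ_i` being compatible with `Δ_i` and
monotone (increasing or decreasing) for the anteriority preorders, with `Δ_{i0}` and
`δ_{i0}` the identities. -/
structure InteractionCtx (F : DynFamily) where
  R : Set (∀ i, (F.H i → Option (F.X i)) × F.L i)
  i0 : F.I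
  Δ : ∀ i, F.D i0 → F.D i
  δ : ∀ i, F.H i0 → F.H i
  δMem : ∀ i (S : F.D i0), ∀ t ∈ F.hS i0 S, δ i t ∈ F.hS i (Δ i S)
  δMono : ∀ i, (∀ s t, F.ante i0 s t → F.ante i (δ i s) (δ i t)) ∨
               (∀ s t, F.ante i0 s t → F.ante i (δ i t) (δ i s))
  ΔId : ∀ S : F.D i0, Δ i0 S = S
  δId : ∀ t, δ i0 t = t

/-- The coherent part `Ř` of the interaction request: those families of the request in
which each `σ_i` is an outgoing realization of `A_i` for the parameter value `λ_i`. -/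
def InteractionCtx.Rcheck {F : DynFamily} (C : InteractionCtx F) :
    Set (∀ i, (F.H i → Option (F.X i)) × F.L i) :=
  {q | q ∈ C.R ∧ ∀ i, F.IsRealization i (q i).2 (q i).1}

/-- The parametric set `M = Im(br(Ř))` of the global dynamic. -/
def InteractionCtx.Mset {F : DynFamily} (C : InteractionCtx F) : Set (∀ i, F.L i) :=
  {μ | ∃ σf : ∀ i, F.H i → Option (F.X i), (fun i => (σf i, μ i)) ∈ C.Rcheck}

/-- The set `S^β` of states of type `S` of the global dynamic `β`. -/
def InteractionCtx.Sbeta {F : DynFamily} (C : InteractionCtx F) (S : F.D C.i0) :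
    Set (∀ i, F.X i) :=
  {a | (∀ i, a i ∈ F.stS i (C.Δ i S)) ∧ ∀ i, F.rho i (a i) = C.δ i (F.rho C.i0 (a C.i0))}

/-- The transition `d^β_μ` of the global dynamic `β`. -/
def InteractionCtx.dbeta {F : DynFamily} (C : InteractionCtx F) {S T : F.D C.i0}
    (d : S ⟶ T) (μ : ∀ i, F.L i) (a : ∀ i, F.X i) : Set (∀ i, F.X i) :=
  {b | b ∈ C.Sbeta T ∧ F.rho C.i0 (b C.i0) = F.hmap C.i0 d (F.rho C.i0 (a C.i0)) ∧
      ∃ σf : ∀ i, F.H i → Option (F.X i), (fun i => (σf i, μ i)) ∈ C.Rcheck ∧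
        ∀ i, F.Pass i (σf i) (a i) ∧ F.Pass i (σf i) (b i)}


/-!
Let `c ∈ (d ≫ e)^β_μ(a)`, witnessed by a coherent family `(σ_i)` passing through every `a_i`
and `c_i`, and let `t = ρ_{i0}(a_{i0})`. The intermediate instant `d(t)` lies between `t` and
`(d ≫ e)(t)` for anteriority, so each `δ_i(d(t))` lies (in one order or the other, as `δ_i` is
monotone) between the instants `ρ_i(a_i)` and `ρ_i(c_i)` where `σ_i` is defined. The domain of
a realization is closed downwards for anteriority, hence `σ_i` is defined at `δ_i(d(t))`, and
`b_i := σ_i(δ_i(d(t)))` gives the intermediate state; the same family `(σ_i)` witnesses both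
transitions `a ↦ b` and `b ↦ c`.
-/

namespace DynFamily

variable {F : DynFamily} {i : F.I} {lam : F.L i} {σ : F.H i → Option (F.X i)}

theorem IsRealization.exists_eq_some_of_ante (hσ : F.IsRealization i lam σ) {s t : F.H i}
    {x : F.X i} (hst : F.ante i s t) (ht : σ t = some x) : ∃ y, σ s = some y := by
  obtain ⟨S, T, f, hsS, rfl⟩ := hst
  obtain ⟨y, hy, -⟩ := hσ.2.2.2 f s hsS x ht
  exact ⟨y, hy⟩

theorem IsRealization.pass_of_eq_some (hσ : F.IsRealization i lam σ) {t : F.H i} {y : F.X i}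
    (ht : σ t = some y) : F.Pass i σ y := by
  rwa [Pass, hσ.2.1 t y ht]

end DynFamily

namespace InteractionCtx

variable {F : DynFamily} (C : InteractionCtx F)

theorem exists_eq_some_of_ante_of_ante {i : F.I} {lam : F.L i} {σ : F.H i → Option (F.X i)}
    (hσ : F.IsRealization i lam σ) {s t u : F.H C.i0} (hst : F.ante C.i0 s t)
    (htu : F.ante C.i0 t u) {x z : F.X i} (hs : σ (C.δ i s) = some x)
    (hu : σ (C.δ i u) = some z) : ∃ y, σ (C.δ i t) = some y := by
  rcases C.δMono i with hmono | hmono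
  · exact hσ.exists_eq_some_of_ante (hmono t u htu) hu
  · exact hσ.exists_eq_some_of_ante (hmono s t hst) hs

theorem mem_stS_i0_of_mem_Sbeta {S : F.D C.i0} {a : ∀ i, F.X i} (ha : a ∈ C.Sbeta S) :
    a C.i0 ∈ F.stS C.i0 S := by
  simpa only [C.ΔId] using ha.1 C.i0

theorem mem_Sbeta_of_eq_some {σf : ∀ i, F.H i → Option (F.X i)} {μ : ∀ i, F.L i}
    (hσ : ∀ i, F.IsRealization i (μ i) (σf i)) {T : F.D C.i0} {t : F.H C.i0}
    (ht : t ∈ F.hS C.i0 T) {b : ∀ i, F.X i} (hb : ∀ i, σf i (C.δ i t) = some (b i)) :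
    b ∈ C.Sbeta T ∧ F.rho C.i0 (b C.i0) = t := by
  have hrho : ∀ i, F.rho i (b i) = C.δ i t := fun i => (hσ i).2.1 _ _ (hb i)
  have hrho0 : F.rho C.i0 (b C.i0) = t := by rw [hrho, C.δId]
  refine ⟨⟨fun i => (hσ i).2.2.1 _ _ (C.δMem i T t ht) _ (hb i), fun i => ?_⟩, hrho0⟩
  rw [hrho i, hrho0]

end InteractionCtx

theorem stmt_3_general (F : DynFamily) (C : InteractionCtx F) :
    ∀ ⦃S T U : F.D C.i0⦄ (d : S ⟶ T) (e : T ⟶ U) (μ : ∀ i, F.L i), μ ∈ C.Mset →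
      ∀ a ∈ C.Sbeta S, ∀ c ∈ C.dbeta (d ≫ e) μ a,
        ∃ b ∈ C.dbeta d μ a, c ∈ C.dbeta e μ b := by
  intro S T U d e μ _ a ha c ⟨hcS, hcρ, σf, hσR, hpass⟩
  set t := F.rho C.i0 (a C.i0)
  have htS : t ∈ F.hS C.i0 S := F.rhoMem C.i0 S _ (C.mem_stS_i0_of_mem_Sbeta ha)
  have hreal : ∀ i, F.IsRealization i (μ i) (σf i) := hσR.2
  have hdef : ∀ i, ∃ y, σf i (C.δ i (F.hmap C.i0 d t)) = some y := by
    intro i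
    have hσa : σf i (C.δ i t) = some (a i) := by rw [← ha.2 i]; exact (hpass i).1
    have hσc : σf i (C.δ i (F.hmap C.i0 (d ≫ e) t)) = some (c i) := by
      rw [← hcρ, ← hcS.2 i]; exact (hpass i).2
    exact C.exists_eq_some_of_ante_of_ante (hreal i) ⟨S, T, d, htS, rfl⟩
      ⟨T, U, e, F.hMem C.i0 d t htS, (F.hComp C.i0 d e t htS).symm⟩ hσa hσc
  choose b hb using hdef
  obtain ⟨hbT, hbρ⟩ := C.mem_Sbeta_of_eq_some hreal (F.hMem C.i0 d t htS) hb
  have hpassb : ∀ i, F.Pass i (σf i) (b i) := fun i => (hreal i).pass_of_eq_some (hb i)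
  refine ⟨b, ⟨hbT, hbρ, σf, hσR, fun i => ⟨(hpass i).1, hpassb i⟩⟩,
    ⟨hcS, ?_, σf, hσR, fun i => ⟨hpassb i, (hpass i).2⟩⟩⟩
  rw [hcρ, hbρ, F.hComp C.i0 d e t htS]

/-- Lax-functorial stability theorem, lax composition part:
for all composable arrows `d : S ⟶ T` and `e : T ⟶ U` of `E = D_{i0}` and every `μ ∈ M`,
`(e ∘ d)^β_μ ⊆ e^β_μ ⊙ d^β_μ` : for every `a ∈ S^β` and every `c ∈ (e ∘ d)^β_μ(a)` there
exists `b ∈ d^β_μ(a)` with `c ∈ e^β_μ(b)`.  (Together with disjunctivity and the lax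
identity condition, this shows that `β` is an `M`-dynamic on `E`.) -/
theorem stmt_3 (F : DynFamily) (C : InteractionCtx F) (hadm : C.Rcheck.Nonempty) :
    ∀ ⦃S T U : F.D C.i0⦄ (d : S ⟶ T) (e : T ⟶ U) (μ : ∀ i, F.L i), μ ∈ C.Mset →
      ∀ a ∈ C.Sbeta S, ∀ c ∈ C.dbeta (d ≫ e) μ a,
        ∃ b ∈ C.dbeta d μ a, c ∈ C.dbeta e μ b :=
  stmt_3_general F C
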